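/- arXiv:2410.06077 — 6 statements merged into one kernel-verified Lean document; each statement's English description precedes it below -/
import Mathlib

section
/- If (X, d̂) is a bounded metric space, Γ is a countable group acting on X by homeomorphisms via a surjective representation ρ: F_∞ → Γ, and s > log 3, then the function δ(x,y) := Σ_{g ∈ F_∞} exp(-s‖g‖)·d̂(ρ(g)⁻¹x, ρ(g)⁻¹y) is a well-defined bounded metric on X, where ‖g‖ is the word length of g in F_2 under the embedding x_i ↦ t^i x t^{-i}. -/
/-- The group of self-homeomorphisms of `X`, under composition. -/
instance homeoGroup (X : Type*) [TopologicalSpace X] : Group (X ≃ₜ X) where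
  mul f g := g.trans f
  one := Homeomorph.refl X
  inv := Homeomorph.symm
  mul_assoc f g h := rfl
  one_mul f := by ext x; rfl
  mul_one f := by ext x; rfl
  inv_mul_cancel f := by ext x; exact f.symm_apply_apply x

/-- The embedding `F_∞ → F₂ = ⟨x,t⟩`, `x_i ↦ t^i x t^{-i}`. -/
def embed : FreeGroup ℕ →* FreeGroup Bool :=
  FreeGroup.lift fun i : ℕ =>
    (FreeGroup.of true : FreeGroup Bool) ^ i * FreeGroup.of false *
      ((FreeGroup.of true) ^ i)⁻¹

/-- Word length of `g ∈ F_∞`, measured in `F₂` via the embedding `x_i ↦ t^i x t^{-i}`. -/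
def wl (g : FreeGroup ℕ) : ℕ := (embed g).norm

/-- The averaged distance `δ(x,y) = ∑_{g ∈ F_∞} exp(-s‖g‖) d̂(ρ(g)⁻¹ x, ρ(g)⁻¹ y)`. -/
noncomputable def delta {X : Type*} [MetricSpace X] (ρ : FreeGroup ℕ →* (X ≃ₜ X)) (s : ℝ)
    (x y : X) : ℝ :=
  ∑' g : FreeGroup ℕ, Real.exp (-s * (wl g : ℝ)) * dist ((ρ g).symm x) ((ρ g).symm y)

/-! ### Auxiliary: injectivity of `embed` -/

section EmbedInjective

open SemidirectProduct

/-- The shift action of `ℤ` on `FreeGroup ℤ`. -/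
def shiftφ : Multiplicative ℤ →* MulAut (FreeGroup ℤ) :=
  MonoidHom.mk' (fun n => FreeGroup.freeGroupCongr (Equiv.addLeft n.toAdd))
    (by
      intro m n
      ext a
      simp [MulAut.mul_def, add_assoc]
      rw [FreeGroup.map.comp]
      simp [Function.comp, add_assoc])

/-- A homomorphism `F₂ → FreeGroup ℤ ⋊ ℤ` detecting the subgroup generated by the
`t^i x t^{-i}`. -/
def Φ : FreeGroup Bool →* FreeGroup ℤ ⋊[shiftφ] Multiplicative ℤ :=
  FreeGroup.lift fun b : Bool =>
    if b then SemidirectProduct.inr (Multiplicative.ofAdd 1)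
    else SemidirectProduct.inl (FreeGroup.of (0 : ℤ))

theorem Φ_embed_of (i : ℕ) :
    Φ (embed (FreeGroup.of i)) = SemidirectProduct.inl (FreeGroup.of (i : ℤ)) := by
  have h1 : Φ (FreeGroup.of true) = SemidirectProduct.inr (Multiplicative.ofAdd 1) := by
    simp [Φ, FreeGroup.lift_apply_of]
  have h2 : Φ (FreeGroup.of false) = SemidirectProduct.inl (FreeGroup.of (0 : ℤ)) := by
    simp [Φ, FreeGroup.lift_apply_of]
  have hpow : Φ (FreeGroup.of true ^ i) = SemidirectProduct.inr (Multiplicative.ofAdd (i : ℤ)) := by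
    rw [map_pow, h1, ← map_pow]
    congr 1
    simp [← ofAdd_nsmul]
  simp only [embed, FreeGroup.lift_apply_of, map_mul, map_inv, hpow, h2]
  rw [← map_inv,
    ← SemidirectProduct.inl_aut (φ := shiftφ) (Multiplicative.ofAdd (i : ℤ)) (FreeGroup.of 0)]
  congr 1

theorem embed_injective : Function.Injective embed := by
  have key : Φ.comp embed = SemidirectProduct.inl.comp (FreeGroup.map (Int.ofNat)) := by
    apply FreeGroup.ext_hom
    intro a
    simp only [MonoidHom.comp_apply, Φ_embed_of, FreeGroup.map.of]
    rfl
  have hmap : Function.Injective (FreeGroup.map (Int.ofNat) : FreeGroup ℕ →* FreeGroup ℤ) := by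
    have h0 : (FreeGroup.map Int.toNat).comp (FreeGroup.map Int.ofNat) =
        MonoidHom.id (FreeGroup ℕ) := by
      apply FreeGroup.ext_hom; intro a; simp [FreeGroup.map.of]
    intro a b h
    have h2 := congrArg (FreeGroup.map Int.toNat) h
    rw [← MonoidHom.comp_apply, ← MonoidHom.comp_apply, h0] at h2
    simpa using h2
  have hL : Function.Injective (Φ.comp embed) := by
    rw [key]
    exact SemidirectProduct.inl_injective.comp hmap
  intro a b h
  apply hL
  simp [MonoidHom.comp_apply, h]

end EmbedInjective

/-! ### Auxiliary: encoding reduced words of `F₂` into `List (Fin 3)` -/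

section Encoding

/-- Letters of `F₂`-words. -/
abbrev Ltr := Bool × Bool

/-- Non-cancellation relation: `q` may follow `p` in a reduced word. -/
def Rok (p q : Ltr) : Prop := ¬(q.1 = p.1 ∧ q.2 = !p.2)

instance : DecidableRel Rok := fun _ _ => by unfold Rok; infer_instance

theorem reduce_cons_self {a : Ltr} {M : List Ltr}
    (h : FreeGroup.reduce (a :: M) = a :: M) : FreeGroup.reduce M = M := by
  have hlen : (FreeGroup.reduce M).length ≤ M.length :=
    (FreeGroup.reduce.red (L := M)).length_le
  rw [FreeGroup.reduce.cons] at h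
  cases hr : FreeGroup.reduce M with
  | nil =>
    rw [hr] at h
    dsimp only at h
    cases M with
    | nil => exact hr
    | cons b t => exact absurd (congrArg List.length h) (by simp)
  | cons hd tl =>
    rw [hr] at h
    dsimp only at h
    by_cases hb : a.1 = hd.1 ∧ a.2 = !hd.2
    · rw [if_pos hb] at h
      exfalso
      have := congrArg List.length h
      rw [hr] at hlen
      simp at this hlen
      omega
    · rw [if_neg hb] at h
      have : M = hd :: tl := by injection h with h1 h2; exact h2.symm
      rw [this, ← hr, this]

theorem chain'_of_reduce : ∀ (l : List Ltr), FreeGroup.reduce l = l → List.Chain' Rok l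
  | [], _ => List.isChain_nil
  | [_], _ => List.isChain_singleton _
  | a :: b :: t, h => by
    unfold List.Chain'
    rw [List.isChain_cons_cons]
    constructor
    · intro hbad
      have hb : b = (a.1, !a.2) := Prod.ext hbad.1 hbad.2
      have : FreeGroup.reduce (a :: b :: t) = [] ++ (a.1, a.2) :: (a.1, !a.2) :: t := by
        rw [h, hb]; simp
      exact FreeGroup.reduce.not this
    · exact chain'_of_reduce (b :: t) (reduce_cons_self h)

theorem chain'_toWord (w : FreeGroup Bool) : List.Chain' Rok w.toWord :=
  chain'_of_reduce _ (FreeGroup.reduce_toWord w)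

/-- numeric code of a letter -/
def codeL (p : Ltr) : ℕ := (cond p.1 2 0) + cond p.2 1 0

/-- encode a letter `q` following letter `p`, assuming `Rok p q`, into `Fin 3`. -/
def sqc (p q : Ltr) : Fin 3 :=
  ⟨(if codeL q < codeL (p.1, !p.2) then codeL q else codeL q - 1) % 3,
    Nat.mod_lt _ (by norm_num)⟩

theorem sqc_inj : ∀ p q q' : Ltr, Rok p q → Rok p q' → sqc p q = sqc p q' → q = q' := by decide

/-- encode the first letter into two `Fin 3` symbols -/
def hdc (q : Ltr) : Fin 3 × Fin 3 :=
  (⟨cond q.1 1 0, by cases q.1 <;> simp⟩, ⟨cond q.2 1 0, by cases q.2 <;> simp⟩)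

theorem hdc_inj : ∀ q q' : Ltr, hdc q = hdc q' → q = q' := by decide

def encAux : Ltr → List Ltr → List (Fin 3)
  | _, [] => []
  | p, q :: t => sqc p q :: encAux q t

def enc : List Ltr → List (Fin 3)
  | [] => []
  | q :: t => (hdc q).1 :: (hdc q).2 :: encAux q t

theorem encAux_length : ∀ (p : Ltr) (t : List Ltr), (encAux p t).length = t.length
  | _, [] => rfl
  | _, q :: t => by simp [encAux, encAux_length q t]

theorem enc_length_le : ∀ l : List Ltr, (enc l).length ≤ l.length + 1
  | [] => by simp [enc]
  | q :: t => by simp [enc, encAux_length]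

theorem encAux_inj : ∀ (t₁ t₂ : List Ltr) (p : Ltr), List.Chain' Rok (p :: t₁) →
    List.Chain' Rok (p :: t₂) → encAux p t₁ = encAux p t₂ → t₁ = t₂
  | [], [], _, _, _, _ => rfl
  | [], _ :: _, _, _, _, h => by simp [encAux] at h
  | _ :: _, [], _, _, _, h => by simp [encAux] at h
  | q :: t, q' :: t', p, hc, hc', h => by
    unfold List.Chain' at hc hc'
    rw [List.isChain_cons_cons] at hc hc'
    simp only [encAux, List.cons.injEq] at h
    have hq : q = q' := sqc_inj p q q' hc.1 hc'.1 h.1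
    subst hq
    rw [encAux_inj t t' q hc.2 hc'.2 h.2]

theorem enc_inj : ∀ (l₁ l₂ : List Ltr), List.Chain' Rok l₁ → List.Chain' Rok l₂ →
    enc l₁ = enc l₂ → l₁ = l₂
  | [], [], _, _, _ => rfl
  | [], _ :: _, _, _, h => by simp [enc] at h
  | _ :: _, [], _, _, h => by simp [enc] at h
  | q :: t, q' :: t', hc, hc', h => by
    simp only [enc, List.cons.injEq] at h
    have hq : q = q' := hdc_inj q q' (Prod.ext h.1 h.2.1)
    subst hq
    rw [encAux_inj t t' q hc hc' h.2.2]

end Encoding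

/-! ### Auxiliary: summability -/

theorem summable_len {r : ℝ} (hr0 : 0 ≤ r) (hr3 : r < 1/3) :
    Summable (fun l : List (Fin 3) => r ^ l.length) := by
  rw [← (List.equivSigmaTuple (α := Fin 3)).symm.summable_iff]
  have he : ((fun l : List (Fin 3) => r ^ l.length) ∘ (List.equivSigmaTuple (α := Fin 3)).symm)
      = fun p : Σ n, Fin n → Fin 3 => r ^ p.1 := by
    funext p
    rcases p with ⟨n, f⟩
    simp [List.equivSigmaTuple]
  rw [he]
  rw [summable_sigma_of_nonneg (fun p => by positivity)]
  constructor
  · intro n; exact Summable.of_finite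
  · have : (fun n : ℕ => ∑' _ : Fin n → Fin 3, r ^ n) = fun n : ℕ => (3*r) ^ n := by
      funext n
      rw [tsum_const]
      simp [Nat.card_eq_fintype_card, mul_pow, nsmul_eq_mul]
    rw [this]
    exact summable_geometric_of_lt_one (by positivity) (by linarith)

theorem summable_base {s : ℝ} (hs : Real.log 3 < s) :
    Summable fun g : FreeGroup ℕ => Real.exp (-s * (wl g : ℝ)) := by
  set r : ℝ := Real.exp (-s) with hr
  have hr0 : 0 < r := Real.exp_pos _
  have hr1 : r < 1 / 3 := by
    have h4 : Real.exp (-(Real.log 3)) = (3:ℝ)⁻¹ := by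
      rw [Real.exp_neg, Real.exp_log (by norm_num : (0:ℝ) < 3)]
    have h3 : Real.exp (-s) < Real.exp (-(Real.log 3)) :=
      Real.exp_lt_exp.mpr (by linarith)
    rw [h4] at h3
    rw [hr]
    linarith
  have heq : (fun g : FreeGroup ℕ => Real.exp (-s * (wl g : ℝ)))
      = fun g : FreeGroup ℕ => r ^ (wl g) := by
    funext g
    rw [hr, mul_comm, Real.exp_nat_mul]
  rw [heq]
  -- the injective encoding
  set E : FreeGroup ℕ → List (Fin 3) := fun g => enc ((embed g).toWord) with hE
  have hEinj : Function.Injective E := by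
    intro a b h
    exact embed_injective (FreeGroup.toWord_injective
      (enc_inj _ _ (chain'_toWord _) (chain'_toWord _) h))
  have hsum : Summable fun g : FreeGroup ℕ => r⁻¹ * r ^ (E g).length := by
    exact ((summable_len hr0.le hr1).comp_injective hEinj).mul_left _
  apply Summable.of_nonneg_of_le (fun g => by positivity) _ hsum
  intro g
  have hlen : (E g).length ≤ wl g + 1 := by
    have : wl g = (embed g).toWord.length := rfl
    rw [this]
    exact enc_length_le _
  have hp : r ^ (wl g + 1) ≤ r ^ (E g).length :=
    pow_le_pow_of_le_one hr0.le (by linarith) hlen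
  calc r ^ wl g = r⁻¹ * r ^ (wl g + 1) := by
        rw [pow_succ]; field_simp
    _ ≤ r⁻¹ * r ^ (E g).length := by
        apply mul_le_mul_of_nonneg_left hp (by positivity)

/-- If `(X, d̂)` is a bounded metric space, `Γ` a countable group acting on `X` by
homeomorphisms via a surjective representation `ρ : F_∞ → Γ`, and `s > log 3`, then
`δ(x,y) := ∑_{g} exp(-s‖g‖) d̂(ρ(g)⁻¹x, ρ(g)⁻¹y)` is a well-defined bounded metric on `X`. -/
theorem delta_is_bounded_metric {X : Type*} [MetricSpace X] (C : ℝ)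
    (hC : ∀ x y : X, dist x y ≤ C)
    (Γ : Subgroup (X ≃ₜ X)) [Countable Γ]
    (ρ : FreeGroup ℕ →* (X ≃ₜ X)) (hρ : ρ.range = Γ)
    (s : ℝ) (hs : Real.log 3 < s) :
    (∀ x y : X,
      Summable fun g : FreeGroup ℕ =>
        Real.exp (-s * (wl g : ℝ)) * dist ((ρ g).symm x) ((ρ g).symm y)) ∧
    (∀ x y : X, delta ρ s x y = 0 ↔ x = y) ∧
    (∀ x y : X, delta ρ s x y = delta ρ s y x) ∧
    (∀ x y z : X, delta ρ s x z ≤ delta ρ s x y + delta ρ s y z) ∧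
    (∃ C' : ℝ, ∀ x y : X, delta ρ s x y ≤ C') := by
  have Sb := summable_base hs
  have hC0 : ∀ x y : X, dist x y ≤ max C 0 := fun x y => le_trans (hC x y) (le_max_left _ _)
  have S : ∀ x y : X,
      Summable fun g : FreeGroup ℕ =>
        Real.exp (-s * (wl g : ℝ)) * dist ((ρ g).symm x) ((ρ g).symm y) := by
    intro x y
    exact Summable.of_nonneg_of_le (fun g => by positivity)
      (fun g => mul_le_mul_of_nonneg_left (hC0 _ _) (Real.exp_pos _).le)
      (Sb.mul_right _)
  refine ⟨S, ?_, ?_, ?_, ?_⟩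
  · intro x y
    constructor
    · intro h
      have h1 : dist x y ≤ delta ρ s x y := by
        have h := Summable.le_tsum (S x y) 1 (fun g _ => by positivity)
        have e1 : ((ρ (1 : FreeGroup ℕ)).symm : X ≃ₜ X) = Homeomorph.refl X := by
          rw [map_one]; rfl
        rw [e1] at h
        simpa [delta, wl, Homeomorph.refl_apply] using h
      rw [h] at h1
      exact dist_le_zero.mp h1
    · intro h
      subst h
      simp [delta, dist_self]
  · intro x y
    exact tsum_congr fun g => by rw [dist_comm]
  · intro x y z
    have hle : ∀ g : FreeGroup ℕ,
        Real.exp (-s * (wl g : ℝ)) * dist ((ρ g).symm x) ((ρ g).symm z) ≤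
          Real.exp (-s * (wl g : ℝ)) * dist ((ρ g).symm x) ((ρ g).symm y) +
          Real.exp (-s * (wl g : ℝ)) * dist ((ρ g).symm y) ((ρ g).symm z) := by
      intro g
      rw [← mul_add]
      exact mul_le_mul_of_nonneg_left (dist_triangle _ _ _) (Real.exp_pos _).le
    calc delta ρ s x z ≤ ∑' g : FreeGroup ℕ,
          (Real.exp (-s * (wl g : ℝ)) * dist ((ρ g).symm x) ((ρ g).symm y) +
           Real.exp (-s * (wl g : ℝ)) * dist ((ρ g).symm y) ((ρ g).symm z)) :=
        Summable.tsum_le_tsum hle (S x z) ((S x y).add (S y z))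
      _ = delta ρ s x y + delta ρ s y z := Summable.tsum_add (S x y) (S y z)
  · refine ⟨(∑' g : FreeGroup ℕ, Real.exp (-s * (wl g : ℝ))) * max C 0, ?_⟩
    intro x y
    calc delta ρ s x y ≤ ∑' g : FreeGroup ℕ, Real.exp (-s * (wl g : ℝ)) * max C 0 :=
        Summable.tsum_le_tsum (fun g => mul_le_mul_of_nonneg_left (hC0 _ _) (Real.exp_pos _).le)
          (S x y) (Sb.mul_right _)
      _ = (∑' g : FreeGroup ℕ, Real.exp (-s * (wl g : ℝ))) * max C 0 := tsum_mul_right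
end

section
/- Let (X, d̂) be a bounded metric space, ρ: F_∞ → Homeo(X) an action by homeomorphisms, s > log 3, and define δ := Σ_{g ∈ F_∞} exp(-s‖g‖)·d̂∘ρ(g)⁻¹. Then for every g ∈ F_∞ and all x, y ∈ X, exp(-s‖g‖)·δ(x,y) ≤ δ(ρ(g)x, ρ(g)y) ≤ exp(s‖g‖)·δ(x,y); in particular each ρ(g) is a bi-Lipschitz homeomorphism of (X, δ). -/
/-!
Reindexing by `h ↦ g * h` turns `δ(ρ(g)x, ρ(g)y)` into the series for `δ(x, y)` with weights
`exp(-s‖gh‖)` in place of `exp(-s‖h‖)`, and `‖h‖ - ‖g‖ ≤ ‖gh‖ ≤ ‖g‖ + ‖h‖` compares the two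
weights termwise. Termwise bounds between nonnegative series pass to their sums even without
summability, since the two series converge or diverge together and a divergent `tsum` is `0`.
-/

open Real

theorem tsum_mul_le_tsum_le_tsum_mul {ι : Type*} {a b : ι → ℝ} {c c' : ℝ}
    (ha : ∀ i, 0 ≤ a i) (hc : 0 < c)
    (hlow : ∀ i, c * a i ≤ b i) (hhigh : ∀ i, b i ≤ c' * a i) :
    c * ∑' i, a i ≤ ∑' i, b i ∧ ∑' i, b i ≤ c' * ∑' i, a i := by
  have hb : ∀ i, 0 ≤ b i := fun i => (mul_nonneg hc.le (ha i)).trans (hlow i)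
  rw [← tsum_mul_left, ← tsum_mul_left]
  by_cases hsa : Summable a
  · have hsb : Summable b := .of_nonneg_of_le hb hhigh (hsa.mul_left c')
    exact ⟨(hsa.mul_left c).tsum_le_tsum hlow hsb, hsb.tsum_le_tsum hhigh (hsa.mul_left c')⟩
  · have hsb : ¬Summable b := fun hsb =>
      hsa <| (summable_mul_left_iff hc.ne').1 <|
        .of_nonneg_of_le (fun i => mul_nonneg hc.le (ha i)) hlow hsb
    simp only [tsum_mul_left, tsum_eq_zero_of_not_summable hsa,
      tsum_eq_zero_of_not_summable hsb, mul_zero, le_refl, and_self]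

theorem wl_mul_le (g h : FreeGroup ℕ) : wl (g * h) ≤ wl g + wl h := by
  simpa only [wl, map_mul] using FreeGroup.norm_mul_le _ _

theorem wl_inv (g : FreeGroup ℕ) : wl g⁻¹ = wl g := by
  simpa only [wl, map_inv] using FreeGroup.norm_inv_eq

theorem wl_le_wl_add_wl_mul (g h : FreeGroup ℕ) : wl h ≤ wl g + wl (g * h) := by
  simpa only [wl_inv, inv_mul_cancel_left] using wl_mul_le g⁻¹ (g * h)

theorem exp_neg_wl_mul_bounds {s : ℝ} (hs : 0 ≤ s) (g h : FreeGroup ℕ) :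
    exp (-s * wl g) * exp (-s * wl h) ≤ exp (-s * wl (g * h)) ∧
      exp (-s * wl (g * h)) ≤ exp (s * wl g) * exp (-s * wl h) := by
  have hmul : (wl (g * h) : ℝ) ≤ wl g + wl h := by exact_mod_cast wl_mul_le g h
  have hinv : (wl h : ℝ) ≤ wl g + wl (g * h) := by
    exact_mod_cast wl_le_wl_add_wl_mul g h
  simp only [← exp_add, exp_le_exp]
  constructor <;> nlinarith

theorem symm_apply_mul_apply {X : Type*} [TopologicalSpace X] (ρ : FreeGroup ℕ →* (X ≃ₜ X))
    (g h : FreeGroup ℕ) (x : X) : (ρ (g * h)).symm (ρ g x) = (ρ h).symm x := by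
  rw [map_mul]
  exact congrArg (ρ h).symm ((ρ g).symm_apply_apply x)

theorem delta_apply_apply {X : Type*} [MetricSpace X] (ρ : FreeGroup ℕ →* (X ≃ₜ X))
    (s : ℝ) (g : FreeGroup ℕ) (x y : X) :
    delta ρ s (ρ g x) (ρ g y) =
      ∑' h, exp (-s * wl (g * h)) * dist ((ρ h).symm x) ((ρ h).symm y) := by
  rw [delta, ← (Equiv.mulLeft g).tsum_eq]
  simp only [Equiv.coe_mulLeft, symm_apply_mul_apply]

theorem delta_biLipschitz_general {X : Type*} [MetricSpace X]
    (ρ : FreeGroup ℕ →* (X ≃ₜ X)) (s : ℝ) (hs : Real.log 3 < s) :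
    ∀ (g : FreeGroup ℕ) (x y : X),
      Real.exp (-s * (wl g : ℝ)) * delta ρ s x y ≤ delta ρ s (ρ g x) (ρ g y) ∧
      delta ρ s (ρ g x) (ρ g y) ≤ Real.exp (s * (wl g : ℝ)) * delta ρ s x y := by
  intro g x y
  have hs0 : 0 ≤ s := (log_nonneg (by norm_num)).trans hs.le
  rw [delta_apply_apply]
  refine tsum_mul_le_tsum_le_tsum_mul (fun h => by positivity) (exp_pos _)
    (fun h => ?_) (fun h => ?_)
  · rw [← mul_assoc]
    exact mul_le_mul_of_nonneg_right (exp_neg_wl_mul_bounds hs0 g h).1 dist_nonneg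
  · rw [← mul_assoc]
    exact mul_le_mul_of_nonneg_right (exp_neg_wl_mul_bounds hs0 g h).2 dist_nonneg

/-- With `δ = ∑_{g ∈ F_∞} exp(-s‖g‖) d̂ ∘ ρ(g)⁻¹` as above, every `ρ(g)` is bi-Lipschitz:
`exp(-s‖g‖) δ(x,y) ≤ δ(ρ(g)x, ρ(g)y) ≤ exp(s‖g‖) δ(x,y)`. -/
theorem delta_biLipschitz {X : Type*} [MetricSpace X] (C : ℝ)
    (hC : ∀ x y : X, dist x y ≤ C)
    (ρ : FreeGroup ℕ →* (X ≃ₜ X)) (s : ℝ) (hs : Real.log 3 < s) :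
    ∀ (g : FreeGroup ℕ) (x y : X),
      Real.exp (-s * (wl g : ℝ)) * delta ρ s x y ≤ delta ρ s (ρ g x) (ρ g y) ∧
      delta ρ s (ρ g x) (ρ g y) ≤ Real.exp (s * (wl g : ℝ)) * delta ρ s x y :=
  delta_biLipschitz_general ρ s hs
end

section
/- If X is a metrizable topological space and Γ is a countable subgroup of the homeomorphism group of X, then there exists a metric δ on X compatible with the topology of X such that every element of Γ is a bi-Lipschitz homeomorphism of (X, δ). -/
open Set Filter Topology
open scoped Pointwise

theorem Set.Finite.pow {M : Type*} [Monoid M] {s : Set M} (hs : s.Finite) : ∀ n : ℕ, (s ^ n).Finite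
  | 0 => by simp
  | n + 1 => by rw [pow_succ]; exact (hs.pow n).mul hs

section ProperLength

variable {G : Type*} [Group G]

def wordBall (e : ℕ → G) (n : ℕ) : Set G := insert 1 (e '' Iio n) ^ n

lemma wordBall_finite (e : ℕ → G) (n : ℕ) : (wordBall e n).Finite :=
  (((finite_Iio n).image e).insert 1).pow n

lemma wordBall_mono (e : ℕ → G) {m n : ℕ} (h : m ≤ n) : wordBall e m ⊆ wordBall e n :=
  Set.pow_subset_pow (insert_subset_insert (image_mono (Iio_subset_Iio h))) (mem_insert 1 _) h

lemma wordBall_mul_subset (e : ℕ → G) (m n : ℕ) :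
    wordBall e m * wordBall e n ⊆ wordBall e (m + n) := by
  unfold wordBall
  rw [pow_add]
  exact mul_subset_mul
    (Set.pow_subset_pow_left (insert_subset_insert (image_mono (Iio_subset_Iio le_self_add))))
    (Set.pow_subset_pow_left (insert_subset_insert (image_mono (Iio_subset_Iio le_add_self))))

lemma one_mem_wordBall_zero (e : ℕ → G) : (1 : G) ∈ wordBall e 0 := by
  simp [wordBall]

lemma apply_mem_wordBall_succ (e : ℕ → G) (k : ℕ) : e k ∈ wordBall e (k + 1) :=
  Set.subset_pow (mem_insert 1 _) k.succ_ne_zero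
    (mem_insert_of_mem 1 (mem_image_of_mem e (Nat.lt_succ_self k)))

end ProperLength

theorem exists_subadditive_length_finite_sublevels (G : Type*) [Group G] [Countable G] :
    ∃ L : G → ℕ, L 1 = 0 ∧ (∀ a b, L (a * b) ≤ L a + L b) ∧ ∀ n, {g | L g ≤ n}.Finite := by
  obtain ⟨e, he⟩ := exists_surjective_nat G
  have hL : ∀ g, sInf {n | g ∈ wordBall e n} ∈ {n | g ∈ wordBall e n} := fun g => by
    obtain ⟨k, rfl⟩ := he g
    exact Nat.sInf_mem ⟨k + 1, apply_mem_wordBall_succ e k⟩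
  refine ⟨fun g => sInf {n | g ∈ wordBall e n}, ?_, fun a b => ?_, fun n => ?_⟩
  · exact Nat.le_zero.mp (Nat.sInf_le (one_mem_wordBall_zero e))
  · exact Nat.sInf_le (wordBall_mul_subset e _ _ (mul_mem_mul (hL a) (hL b)))
  · exact (wordBall_finite e n).subset fun g hg => wordBall_mono e hg (hL g)

lemma min_add_le_min_add_min {a b c : ℝ} (ha : 0 ≤ a) (hb : 0 ≤ b) (hc : 0 ≤ c) :
    min (a + b) c ≤ min a c + min b c := by
  simp only [min_def]
  split_ifs <;> linarith

section WeightedDist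

variable {G X : Type*} [Group G] [MetricSpace X] (ρ : G →* (X ≃ₜ X)) (L : G → ℕ)

noncomputable def weightedDist (x y : X) : ℝ :=
  ⨆ g, 2⁻¹ ^ L g * min (dist (ρ g x) (ρ g y)) 1

lemma le_weightedDist (g : G) (x y : X) :
    2⁻¹ ^ L g * min (dist (ρ g x) (ρ g y)) 1 ≤ weightedDist ρ L x y := by
  refine le_ciSup (f := fun g => 2⁻¹ ^ L g * min (dist (ρ g x) (ρ g y)) 1) ⟨1, ?_⟩ g
  rintro _ ⟨g, rfl⟩
  exact mul_le_one₀ (pow_le_one₀ (by norm_num) (by norm_num)) (by positivity) (min_le_right _ _)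

lemma weightedDist_le {x y : X} {a : ℝ}
    (h : ∀ g, 2⁻¹ ^ L g * min (dist (ρ g x) (ρ g y)) 1 ≤ a) : weightedDist ρ L x y ≤ a :=
  ciSup_le h

lemma weightedDist_nonneg (x y : X) : 0 ≤ weightedDist ρ L x y :=
  Real.iSup_nonneg fun _ => by positivity

variable {L}

lemma min_dist_le_weightedDist (hL : L 1 = 0) (x y : X) :
    min (dist x y) 1 ≤ weightedDist ρ L x y := by
  simpa [hL] using le_weightedDist ρ L 1 x y

lemma weightedDist_eq_zero (hL : L 1 = 0) {x y : X} : weightedDist ρ L x y = 0 ↔ x = y := by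
  constructor
  · intro h
    have hmin := (min_dist_le_weightedDist ρ hL x y).trans h.le
    exact dist_le_zero.1 ((min_le_iff.1 hmin).resolve_right (by norm_num))
  · rintro rfl
    exact (weightedDist_le ρ L fun g => by simp).antisymm (weightedDist_nonneg ρ L x x)

lemma weightedDist_comm (x y : X) : weightedDist ρ L x y = weightedDist ρ L y x := by
  simp only [weightedDist, dist_comm]

lemma weightedDist_triangle (x y z : X) :
    weightedDist ρ L x z ≤ weightedDist ρ L x y + weightedDist ρ L y z :=
  weightedDist_le ρ L fun g => calc
    2⁻¹ ^ L g * min (dist (ρ g x) (ρ g z)) 1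
      ≤ 2⁻¹ ^ L g * (min (dist (ρ g x) (ρ g y)) 1 + min (dist (ρ g y) (ρ g z)) 1) := by
        gcongr
        exact (min_le_min_right 1 (dist_triangle _ _ _)).trans
          (min_add_le_min_add_min dist_nonneg dist_nonneg zero_le_one)
    _ ≤ weightedDist ρ L x y + weightedDist ρ L y z := by
        rw [mul_add]
        exact add_le_add (le_weightedDist ρ L g x y) (le_weightedDist ρ L g y z)

lemma inv_two_pow_le_of_le_add {a b c : ℕ} (h : c ≤ a + b) :
    (2⁻¹ : ℝ) ^ a ≤ 2 ^ b * 2⁻¹ ^ c := calc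
  (2⁻¹ : ℝ) ^ a = 2 ^ b * 2⁻¹ ^ (a + b) := by
    rw [pow_add, mul_left_comm, ← mul_pow]; norm_num
  _ ≤ 2 ^ b * 2⁻¹ ^ c :=
    mul_le_mul_of_nonneg_left (pow_le_pow_of_le_one (by norm_num) (by norm_num) h) (by positivity)

lemma weightedDist_map_le (hL : ∀ a b, L (a * b) ≤ L a + L b) (g : G) (x y : X) :
    weightedDist ρ L (ρ g x) (ρ g y) ≤ 2 ^ L g * weightedDist ρ L x y :=
  weightedDist_le ρ L fun γ => calc
    2⁻¹ ^ L γ * min (dist (ρ γ (ρ g x)) (ρ γ (ρ g y))) 1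
      ≤ 2 ^ L g * 2⁻¹ ^ L (γ * g) * min (dist (ρ γ (ρ g x)) (ρ γ (ρ g y))) 1 := by
        gcongr
        exact inv_two_pow_le_of_le_add (hL γ g)
    _ ≤ 2 ^ L g * weightedDist ρ L x y := by
        rw [mul_assoc]
        gcongr
        have h := le_weightedDist ρ L (γ * g) x y
        rwa [map_mul] at h

lemma weightedDist_biLipschitz (hL : ∀ a b, L (a * b) ≤ L a + L b) (g : G) :
    ∃ C ≥ (1 : ℝ), ∀ x y : X, C⁻¹ * weightedDist ρ L x y ≤ weightedDist ρ L (ρ g x) (ρ g y) ∧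
      weightedDist ρ L (ρ g x) (ρ g y) ≤ C * weightedDist ρ L x y := by
  have one_le_two_pow (n : ℕ) : (1 : ℝ) ≤ 2 ^ n := one_le_pow₀ one_le_two
  have inv_apply_apply (z : X) : ρ g⁻¹ (ρ g z) = z := by
    rw [map_inv]
    exact (ρ g).symm_apply_apply z
  refine ⟨2 ^ L g * 2 ^ L g⁻¹, one_le_mul_of_one_le_of_one_le (one_le_two_pow _)
    (one_le_two_pow _), fun x y => ⟨?_, ?_⟩⟩
  · rw [inv_mul_le_iff₀ (by positivity), mul_assoc]
    calc weightedDist ρ L x y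
        = weightedDist ρ L (ρ g⁻¹ (ρ g x)) (ρ g⁻¹ (ρ g y)) := by
          rw [inv_apply_apply, inv_apply_apply]
      _ ≤ 2 ^ L g⁻¹ * weightedDist ρ L (ρ g x) (ρ g y) := weightedDist_map_le ρ hL _ _ _
      _ ≤ 2 ^ L g * (2 ^ L g⁻¹ * weightedDist ρ L (ρ g x) (ρ g y)) :=
          le_mul_of_one_le_left (by have := weightedDist_nonneg ρ L (ρ g x) (ρ g y); positivity)
            (one_le_two_pow _)
  · calc weightedDist ρ L (ρ g x) (ρ g y) ≤ 2 ^ L g * weightedDist ρ L x y :=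
          weightedDist_map_le ρ hL _ _ _
      _ ≤ 2 ^ L g * 2 ^ L g⁻¹ * weightedDist ρ L x y := by
          have := weightedDist_nonneg ρ L x y
          gcongr
          exact le_mul_of_one_le_right (by positivity) (one_le_two_pow _)

lemma eventually_weightedDist_lt (hL : ∀ n, {g | L g ≤ n}.Finite) (x : X) {ε : ℝ}
    (hε : 0 < ε) : ∀ᶠ y in 𝓝 x, weightedDist ρ L x y < ε := by
  obtain ⟨n, hn⟩ := exists_pow_lt_of_lt_one (half_pos hε) (by norm_num : (2⁻¹ : ℝ) < 1)
  have hnear : ∀ᶠ y in 𝓝 x, ∀ g ∈ {g | L g ≤ n}, dist (ρ g y) (ρ g x) < ε / 2 :=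
    (hL n).eventually_all.2 fun g _ =>
      Metric.tendsto_nhds.1 ((ρ g).continuous.tendsto x) _ (half_pos hε)
  filter_upwards [hnear] with y hy
  refine (weightedDist_le ρ L fun g => ?_).trans_lt (half_lt_self hε)
  rcases le_or_gt (L g) n with hg | hg
  · calc 2⁻¹ ^ L g * min (dist (ρ g x) (ρ g y)) 1 ≤ min (dist (ρ g x) (ρ g y)) 1 :=
          mul_le_of_le_one_left (by positivity)
            (pow_le_one₀ (by norm_num) (by norm_num))
      _ ≤ ε / 2 := (min_le_left _ _).trans (dist_comm (ρ g x) _ ▸ (hy g hg).le)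
  · calc 2⁻¹ ^ L g * min (dist (ρ g x) (ρ g y)) 1 ≤ 2⁻¹ ^ L g :=
          mul_le_of_le_one_right (by positivity) (min_le_right _ _)
      _ ≤ 2⁻¹ ^ n := pow_le_pow_of_le_one (by norm_num) (by norm_num) hg.le
      _ ≤ ε / 2 := hn.le

lemma mem_nhds_iff_weightedDist (hL1 : L 1 = 0) (hL : ∀ n, {g | L g ≤ n}.Finite) (x : X)
    (U : Set X) : U ∈ 𝓝 x ↔ ∃ ε > 0, {y | weightedDist ρ L x y < ε} ⊆ U := by
  constructor
  · intro hU
    obtain ⟨ε, hε, hball⟩ := Metric.mem_nhds_iff.1 hU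
    refine ⟨min ε 1, lt_min hε one_pos, fun y hy => hball ?_⟩
    have hlt := (min_dist_le_weightedDist ρ hL1 x y).trans_lt hy
    rw [Metric.mem_ball, dist_comm]
    exact not_le.1 fun h => (min_le_min_right 1 h).not_gt hlt
  · rintro ⟨ε, hε, hsub⟩
    exact mem_of_superset (eventually_weightedDist_lt ρ hL x hε) hsub

end WeightedDist

/-- If `X` is a metrizable topological space and `Γ` is a countable subgroup of the
homeomorphism group of `X`, then `X` admits a metric `δ` compatible with its topology
such that every element of `Γ` is a bi-Lipschitz homeomorphism of `(X, δ)`. -/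
theorem countable_subgroup_biLipschitz {X : Type*} [TopologicalSpace X]
    [TopologicalSpace.MetrizableSpace X] (Γ : Subgroup (X ≃ₜ X)) [Countable Γ] :
    ∃ δ : X → X → ℝ,
      (∀ x y : X, δ x y = 0 ↔ x = y) ∧
      (∀ x y : X, δ x y = δ y x) ∧
      (∀ x y z : X, δ x z ≤ δ x y + δ y z) ∧
      (∀ (x : X) (U : Set X), U ∈ nhds x ↔ ∃ ε > 0, {y : X | δ x y < ε} ⊆ U) ∧
      (∀ γ ∈ Γ, ∃ C ≥ (1:ℝ), ∀ x y : X,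
        C⁻¹ * δ x y ≤ δ (γ x) (γ y) ∧ δ (γ x) (γ y) ≤ C * δ x y) := by
  let := TopologicalSpace.metrizableSpaceMetric X
  obtain ⟨L, hL1, hLmul, hLfin⟩ := exists_subadditive_length_finite_sublevels Γ
  exact ⟨weightedDist Γ.subtype L, fun _ _ => weightedDist_eq_zero _ hL1,
    weightedDist_comm _, weightedDist_triangle _, mem_nhds_iff_weightedDist _ hL1 hLfin,
    fun γ hγ => weightedDist_biLipschitz _ hLmul ⟨γ, hγ⟩⟩
end

section
/- Every countable group embeds into a group generated by two elements. -/
universe u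



open Monoid Function

namespace TwoGenAux

variable {Γ : Type u} [Group Γ]

/-- The ambient free product `Γ * F₂`. -/
abbrev Amb (Γ : Type u) [Group Γ] := Monoid.Coprod Γ (FreeGroup Bool)

/-- The family `s^{-i} * (!s) * s^i * g i` in `Γ * F₂`. -/
def fam (g : ℕ → Γ) (s : Bool) : ℕ → Amb Γ := fun i =>
  (Coprod.inr (FreeGroup.of s) : Amb Γ)⁻¹ ^ i * Coprod.inr (FreeGroup.of (!s)) *
    (Coprod.inr (FreeGroup.of s) : Amb Γ) ^ i * Coprod.inl (g i)

noncomputable def U : Equiv.Perm (FreeGroup ℤ) :=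
  (FreeGroup.freeGroupCongr (Equiv.addRight (1 : ℤ))).toEquiv

noncomputable def L : FreeGroup ℤ →* Equiv.Perm (FreeGroup ℤ) :=
  MulAction.toPermHom (FreeGroup ℤ) (FreeGroup ℤ)

lemma L_apply (z : FreeGroup ℤ) (w : FreeGroup ℤ) : L z w = z * w := rfl

lemma L_injective : Function.Injective L := by
  intro p q h
  have := congrArg (fun e : Equiv.Perm (FreeGroup ℤ) => e 1) h
  simpa [L_apply] using this

lemma conj1 (z : ℤ) : U⁻¹ * L (FreeGroup.of z) * U = L (FreeGroup.of (z - 1)) := by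
  ext w
  show U⁻¹ (L (FreeGroup.of z) (U w)) = L (FreeGroup.of (z - 1)) w
  have hUinv : (U⁻¹ : Equiv.Perm (FreeGroup ℤ)) =
      (FreeGroup.freeGroupCongr (Equiv.addRight (1 : ℤ))).symm.toEquiv := rfl
  rw [L_apply, L_apply, hUinv]
  show (FreeGroup.freeGroupCongr (Equiv.addRight (1 : ℤ))).symm
      (FreeGroup.of z * (FreeGroup.freeGroupCongr (Equiv.addRight (1 : ℤ))) w) = _
  rw [map_mul, MulEquiv.symm_apply_apply]
  rw [FreeGroup.freeGroupCongr_symm]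
  simp [sub_eq_add_neg]

lemma key (i : ℕ) : (U⁻¹) ^ i * L (FreeGroup.of 0) * U ^ i = L (FreeGroup.of (-(i : ℤ))) := by
  induction i with
  | zero => simp
  | succ n ih =>
    rw [pow_succ' U⁻¹, pow_succ U, show (-(↑(n+1) : ℤ)) = (-(n:ℤ)) - 1 by push_cast; ring,
      ← conj1, ← ih]
    group

/-- The evaluation homomorphism. -/
noncomputable def theta (s : Bool) : Amb Γ →* Equiv.Perm (FreeGroup ℤ) × Γ :=
  Coprod.lift ((1 : Γ →* Equiv.Perm (FreeGroup ℤ)).prod (MonoidHom.id Γ))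
    ((FreeGroup.lift (fun b : Bool => if b = s then U else L (FreeGroup.of 0))).prod 1)

lemma theta_fam (g : ℕ → Γ) (s : Bool) (i : ℕ) :
    theta s (fam g s i) = (L (FreeGroup.of (-(i : ℤ))), g i) := by
  have h1 : theta (Γ := Γ) s (Coprod.inr (FreeGroup.of s)) = (U, 1) := by
    simp [theta, Coprod.lift_apply_inr]
  have h2 : theta (Γ := Γ) s (Coprod.inr (FreeGroup.of (!s))) = (L (FreeGroup.of 0), 1) := by
    simp [theta, Coprod.lift_apply_inr]
  have h3 : theta (Γ := Γ) s (Coprod.inl (g i)) = (1, g i) := by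
    simp [theta, Coprod.lift_apply_inl]
  rw [fam]
  rw [map_mul, map_mul, map_mul, map_pow, map_pow, map_inv, h1, h2, h3]
  rw [Prod.ext_iff]
  constructor
  · show (U, (1:Γ)).1⁻¹ ^ i * L (FreeGroup.of 0) * U ^ i * 1 = _
    rw [mul_one]
    exact key i
  · simp

lemma mu_injective :
    Function.Injective (FreeGroup.lift (fun i : ℕ => FreeGroup.of (-(i : ℤ)))) := by
  have hleft : ∀ w : FreeGroup ℕ,
      FreeGroup.map (fun z : ℤ => (-z).toNat)
        (FreeGroup.lift (fun i : ℕ => FreeGroup.of (-(i : ℤ))) w) = w := by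
    intro w
    have h1 : FreeGroup.lift (fun i : ℕ => FreeGroup.of (-(i : ℤ))) w =
        FreeGroup.map (fun i : ℕ => -(i : ℤ)) w := (DFunLike.congr_fun FreeGroup.map_eq_lift w).symm
    rw [h1, FreeGroup.map.comp]
    have : ((fun z : ℤ => (-z).toNat) ∘ fun i : ℕ => -(i : ℤ)) = id := by
      funext n; simp
    rw [this, FreeGroup.map.id]
  exact Function.LeftInverse.injective hleft

/-- The key injectivity lemma: the family `fam g s` is a free basis. -/
lemma fam_inj (g : ℕ → Γ) (s : Bool) :
    Function.Injective (FreeGroup.lift (fam g s)) := by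
  have hcomp : (theta s).comp (FreeGroup.lift (fam g s)) =
      (L.comp (FreeGroup.lift (fun i : ℕ => FreeGroup.of (-(i : ℤ))))).prod
        (FreeGroup.lift g) := by
    apply FreeGroup.ext_hom
    intro i
    simp only [MonoidHom.comp_apply, FreeGroup.lift_apply_of, MonoidHom.prod_apply]
    rw [theta_fam]
  intro w₁ w₂ h
  have h2 : ((theta s).comp (FreeGroup.lift (fam g s))) w₁ =
      ((theta s).comp (FreeGroup.lift (fam g s))) w₂ := by
    simp [MonoidHom.comp_apply, h]
  rw [hcomp] at h2
  simp only [MonoidHom.prod_apply, Prod.ext_iff, MonoidHom.comp_apply] at h2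
  exact mu_injective (L_injective h2.1)

end TwoGenAux


open TwoGenAux HNNExtension in
/-- Every countable group embeds into a group generated by two elements. -/
theorem countable_group_embeds_two_generated (Γ : Type u) [Group Γ] [Countable Γ] :
    ∃ (G : Type u) (gG : Group G) (a b : G) (f : Γ → G),
      @Subgroup.closure G gG {a, b} = ⊤ ∧
      Function.Injective f ∧ ∀ x y : Γ, f (x * y) = f x * f y := by
  classical
  obtain ⟨q₀, hq₀⟩ := exists_surjective_nat Γ
  let q : ℕ → Γ := fun n => Nat.casesOn n 1 q₀
  have hqsurj : ∀ γ : Γ, ∃ n, q n = γ := by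
    intro γ
    obtain ⟨n, hn⟩ := hq₀ γ
    exact ⟨n + 1, hn⟩
  have hq0 : q 0 = 1 := rfl
  let FA := FreeGroup.lift (fam (fun _ => (1 : Γ)) false)
  let FB := FreeGroup.lift (fam q true)
  have hFA : Function.Injective FA := fam_inj (fun _ => (1 : Γ)) false
  have hFB : Function.Injective FB := fam_inj q true
  let φ : FA.range ≃* FB.range :=
    (MonoidHom.ofInjective hFA).symm.trans (MonoidHom.ofInjective hFB)
  set Xe : Amb Γ := Coprod.inr (FreeGroup.of false) with hXe
  set Ye : Amb Γ := Coprod.inr (FreeGroup.of true) with hYe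
  refine ⟨HNNExtension (Amb Γ) FA.range FB.range φ, inferInstance,
    HNNExtension.of Xe, HNNExtension.t,
    fun γ => HNNExtension.of (Coprod.inl γ), ?_, ?_, ?_⟩
  · -- generation
    have hφ : ∀ i : ℕ, ((φ (MonoidHom.ofInjective hFA (FreeGroup.of i)) : FB.range) : Amb Γ) =
        FB (FreeGroup.of i) := by
      intro i
      show ((MonoidHom.ofInjective hFB
        ((MonoidHom.ofInjective hFA).symm (MonoidHom.ofInjective hFA (FreeGroup.of i)))) :
          Amb Γ) = _
      rw [MulEquiv.symm_apply_apply, MonoidHom.ofInjective_apply]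
    have conj : ∀ i : ℕ,
        (HNNExtension.of (FB (FreeGroup.of i)) : HNNExtension (Amb Γ) FA.range FB.range φ) =
          t * HNNExtension.of (FA (FreeGroup.of i)) * t⁻¹ := by
      intro i
      have h := HNNExtension.equiv_eq_conj (φ := φ) (MonoidHom.ofInjective hFA (FreeGroup.of i))
      rw [hφ, MonoidHom.ofInjective_apply] at h
      exact h
    have hFAi : ∀ i : ℕ, FA (FreeGroup.of i) = Xe⁻¹ ^ i * Ye * Xe ^ i := by
      intro i
      show FreeGroup.lift _ _ = _
      rw [FreeGroup.lift_apply_of, fam]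
      simp
      rfl
    have hFBi : ∀ i : ℕ, FB (FreeGroup.of i) = Ye⁻¹ ^ i * Xe * Ye ^ i * Coprod.inl (q i) := by
      intro i
      show FreeGroup.lift _ _ = _
      rw [FreeGroup.lift_apply_of, fam]
      rfl
    rw [eq_top_iff]
    set S := Subgroup.closure
      ({HNNExtension.of Xe, t} : Set (HNNExtension (Amb Γ) FA.range FB.range φ)) with hS
    have hx : HNNExtension.of Xe ∈ S := Subgroup.subset_closure (by simp)
    have ht : t ∈ S := Subgroup.subset_closure (by simp)
    have hy : HNNExtension.of Ye ∈ S := by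
      have h0 := conj 0
      rw [hFAi 0, hFBi 0, hq0] at h0
      simp only [pow_zero, one_mul, mul_one, map_one] at h0
      have : (HNNExtension.of Ye : HNNExtension (Amb Γ) FA.range FB.range φ) =
          t⁻¹ * HNNExtension.of Xe * t := by
        rw [show (HNNExtension.of Xe : HNNExtension (Amb Γ) FA.range FB.range φ) =
          t * HNNExtension.of Ye * t⁻¹ from by simpa using h0]
        group
      rw [this]
      exact S.mul_mem (S.mul_mem (S.inv_mem ht) hx) ht
    have hofA : ∀ i : ℕ, HNNExtension.of (FA (FreeGroup.of i)) ∈ S := by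
      intro i
      rw [hFAi i]
      simp only [map_mul, map_pow, map_inv]
      exact S.mul_mem (S.mul_mem (S.pow_mem (S.inv_mem hx) i) hy) (S.pow_mem hx i)
    have hgam : ∀ γ : Γ, HNNExtension.of (Coprod.inl γ)
        (φ := φ) ∈ S := by
      intro γ
      obtain ⟨i, rfl⟩ := hqsurj γ
      have hB : HNNExtension.of (FB (FreeGroup.of i)) ∈ S := by
        rw [conj i]
        exact S.mul_mem (S.mul_mem ht (hofA i)) (S.inv_mem ht)
      have hpre : HNNExtension.of (Ye⁻¹ ^ i * Xe * Ye ^ i)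
          (φ := φ) ∈ S := by
        simp only [map_mul, map_pow, map_inv]
        exact S.mul_mem (S.mul_mem (S.pow_mem (S.inv_mem hy) i) hx) (S.pow_mem hy i)
      have : (HNNExtension.of (Coprod.inl (q i)) : HNNExtension (Amb Γ) FA.range FB.range φ) =
          (HNNExtension.of (Ye⁻¹ ^ i * Xe * Ye ^ i))⁻¹ * HNNExtension.of (FB (FreeGroup.of i)) := by
        rw [hFBi i, eq_inv_mul_iff_mul_eq, ← map_mul]
      rw [this]
      exact S.mul_mem (S.inv_mem hpre) hB
    intro z hz
    clear hz
    induction z using HNNExtension.induction_on with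
    | of g =>
      induction g using Coprod.induction_on with
      | inl m => exact hgam m
      | inr n =>
        induction n using FreeGroup.induction_on with
        | C1 => simpa using S.one_mem
        | of b =>
          cases b with
          | false => exact hx
          | true => exact hy
        | inv_of b hb => simp only [map_inv]; exact S.inv_mem hb
        | mul u v hu hv => rw [map_mul, map_mul]; exact S.mul_mem hu hv
      | mul u v hu hv => rw [map_mul]; exact S.mul_mem hu hv
    | t => exact ht
    | mul u v hu hv => exact S.mul_mem hu hv
    | inv u hu => exact S.inv_mem hu
  · exact fun a b h => Coprod.inl_injective (HNNExtension.of_injective (φ := φ) h)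
  · intro x y
    simp [map_mul]
end

section
/- Let G be a locally compact group generated by a compact symmetric neighborhood K of 1, and let V be a maximal K-separated subset of G containing 1. Define a graph on V with an edge between x, y ∈ V iff x⁻¹y ∈ K³. Then this graph is connected. -/
open scoped Pointwise

/-- If a locally compact group `G` is generated by a compact symmetric neighborhood `K` of
`1`, and `V ∋ 1` is a maximal `K`-separated subset, then the graph on `V` with edges
`x⁻¹y ∈ K³` is connected: every `v ∈ V` is joined to `1` by a path in `V` with consecutive
steps in `K³`. -/
theorem separated_graph_connected {G : Type*} [Group G] [TopologicalSpace G]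
    [IsTopologicalGroup G] [LocallyCompactSpace G]
    (K : Set G) (hKcpt : IsCompact K) (hKsymm : K⁻¹ = K) (hKnhds : K ∈ nhds (1 : G))
    (hKgen : Subgroup.closure K = ⊤)
    (V : Set G) (h1V : (1 : G) ∈ V)
    (hsep : ∀ x ∈ V, ∀ y ∈ V, x ≠ y → x⁻¹ * y ∉ K)
    (hmax : ∀ W : Set G, V ⊆ W →
      ((1 : G) ∈ W ∧ ∀ x ∈ W, ∀ y ∈ W, x ≠ y → x⁻¹ * y ∉ K) → W = V) :
    ∀ v ∈ V, ∃ (n : ℕ) (c : ℕ → G),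
      c 0 = 1 ∧ c n = v ∧ (∀ i ≤ n, c i ∈ V) ∧
      ∀ i < n, (c i)⁻¹ * c (i + 1) ∈ K * K * K := by
  have h1K : (1 : G) ∈ K := mem_of_mem_nhds hKnhds
  -- density of V
  have hdense : ∀ g : G, ∃ v ∈ V, v⁻¹ * g ∈ K := by
    intro g
    by_contra h
    push_neg at h
    have hgV : g ∉ V := by
      intro hgV
      exact h g hgV (by simp [h1K])
    have hW : insert g V = V := by
      apply hmax (insert g V) (Set.subset_insert _ _)
      refine ⟨Set.mem_insert_of_mem _ h1V, ?_⟩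
      rintro x (rfl | hx) y (rfl | hy) hxy
      · exact absurd rfl hxy
      · intro hxyK
        have : y⁻¹ * x ∈ K := by
          rw [← hKsymm]
          simpa using hxyK
        exact h y hy this
      · exact h x hx
      · exact hsep x hx y hy hxy
    exact hgV (hW ▸ Set.mem_insert g V)
  -- main induction
  have key : ∀ l : List G, (∀ x ∈ l, x ∈ K) → ∀ v ∈ V, v⁻¹ * l.reverse.prod ∈ K →
      ∃ (n : ℕ) (c : ℕ → G),
        c 0 = 1 ∧ c n = v ∧ (∀ i ≤ n, c i ∈ V) ∧
        ∀ i < n, (c i)⁻¹ * c (i + 1) ∈ K * K * K := by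
    intro l
    induction l with
    | nil =>
      intro _ v hv hvK
      have hv1 : v = 1 := by
        by_contra hne
        have hvK' : (1 : G)⁻¹ * v ∈ K := by
          rw [← hKsymm]
          simpa using hvK
        exact hsep 1 h1V v hv (Ne.symm hne) hvK'
      exact ⟨0, fun _ => 1, rfl, hv1.symm, fun i _ => h1V, fun i h => absurd h (Nat.not_lt_zero i)⟩
    | cons k l ih =>
      intro hmem v hv hvK
      have hkK : k ∈ K := hmem k (List.mem_cons_self)
      have hg : (k :: l).reverse.prod = l.reverse.prod * k := by simp
      obtain ⟨v', hv', hv'K⟩ := hdense l.reverse.prod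
      obtain ⟨n, c, hc0, hcn, hcV, hcE⟩ := ih (fun x hx => hmem x (List.mem_cons_of_mem _ hx)) v' hv' hv'K
      refine ⟨n + 1, fun i => if i ≤ n then c i else v, by simp [hc0], by simp, ?_, ?_⟩
      · intro i hi
        by_cases h : i ≤ n
        · simpa [h] using hcV i h
        · simpa [h] using hv
      · intro i hi
        by_cases h : i < n
        · have h1 : i ≤ n := h.le
          have h2 : i + 1 ≤ n := h
          simpa [h1, h2] using hcE i h
        · have hi' : i = n := by omega
          subst hi'
          simp only [le_refl, if_pos, if_neg (by omega : ¬ i + 1 ≤ i)]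
          rw [hcn]
          -- v'⁻¹ * v = (v'⁻¹ * g') * k * (g⁻¹ * v)
          have hgv : ((k :: l).reverse.prod)⁻¹ * v ∈ K := by
            rw [← hKsymm]
            simpa using hvK
          have : v'⁻¹ * v = (v'⁻¹ * l.reverse.prod) * k * (((k :: l).reverse.prod)⁻¹ * v) := by
            rw [hg]; group
          rw [this]
          exact Set.mul_mem_mul (Set.mul_mem_mul hv'K hkK) hgv
  intro v hv
  have hvcl : v ∈ Submonoid.closure K := by
    have h1 : v ∈ (Subgroup.closure K).toSubmonoid := by rw [hKgen]; trivial
    rwa [Subgroup.closure_toSubmonoid, hKsymm, Set.union_self] at h1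
  obtain ⟨l, hl, hlprod⟩ := Submonoid.exists_list_of_mem_closure hvcl
  have hlK : ∀ x ∈ l, x ∈ K := hl
  have := key l.reverse (fun x hx => hlK x (List.mem_reverse.mp hx)) v hv
  apply this
  rw [List.reverse_reverse, hlprod]
  simpa using h1K
end

section
/- Let G be a compactly generated locally compact group with compact symmetric generating neighborhood K of 1, V a maximal K-separated subset containing 1, and define ‖g‖ := inf{d_Γ(1, v) : v ∈ V, g ∈ vK}, where d_Γ is the graph metric on V with edges given by x⁻¹y ∈ K³. Then for all g, h ∈ G, |‖gh‖ − ‖g‖| ≤ 3‖h‖ + 1. -/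
open scoped Pointwise

/-- The graph on a subset `V` of a group, with an edge between `x ≠ y` iff `x⁻¹y ∈ K³`
(stated symmetrically; for symmetric `K` this is the usual condition). -/
def sepGraph (G : Type*) [Group G] (K V : Set G) : SimpleGraph V where
  Adj a b := a ≠ b ∧ (a : G)⁻¹ * b ∈ K * K * K ∧ (b : G)⁻¹ * a ∈ K * K * K
  symm := ⟨by rintro a b ⟨h1, h2, h3⟩; exact ⟨h1.symm, h3, h2⟩⟩
  loopless := ⟨fun a h => h.1 rfl⟩

/-- The norm-like function `‖g‖ := inf { d_Γ(1, v) : v ∈ V, g ∈ vK }`, where `d_Γ` is the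
graph metric of `sepGraph G K V`. -/
noncomputable def gnorm {G : Type*} [Group G] (K V : Set G) (h1V : (1 : G) ∈ V)
    (g : G) : ℕ :=
  sInf {n : ℕ | ∃ v : V, (sepGraph G K V).dist ⟨1, h1V⟩ v = n ∧ (v : G)⁻¹ * g ∈ K}

section Aux

variable {G : Type*} [Group G] {K V : Set G}

lemma aux_invK (hKsymm : K⁻¹ = K) {a : G} (ha : a ∈ K) : a⁻¹ ∈ K := by
  rw [← hKsymm]; exact Set.inv_mem_inv.mpr ha

lemma aux_k3 {a b c : G} (ha : a ∈ K) (hb : b ∈ K) (hc : c ∈ K) :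
    a * b * c ∈ K * K * K :=
  Set.mul_mem_mul (Set.mul_mem_mul ha hb) hc

lemma aux_cover (hKsymm : K⁻¹ = K) (h1K : (1 : G) ∈ K) (h1V : (1 : G) ∈ V)
    (hsep : ∀ x ∈ V, ∀ y ∈ V, x ≠ y → x⁻¹ * y ∉ K)
    (hmax : ∀ W : Set G, V ⊆ W →
      ((1 : G) ∈ W ∧ ∀ x ∈ W, ∀ y ∈ W, x ≠ y → x⁻¹ * y ∉ K) → W = V)
    (g : G) : ∃ v : V, (v : G)⁻¹ * g ∈ K := by
  by_cases hg : ∃ v : V, (v : G)⁻¹ * g ∈ K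
  · exact hg
  push_neg at hg
  have hsepW : ∀ x ∈ insert g V, ∀ y ∈ insert g V, x ≠ y → x⁻¹ * y ∉ K := by
    rintro x (rfl | hx) y (rfl | hy) hxy
    · exact absurd rfl hxy
    · intro hk
      exact hg ⟨y, hy⟩ (by rw [← hKsymm]; simpa using Set.inv_mem_inv.mpr hk)
    · exact hg ⟨x, hx⟩
    · exact hsep x hx y hy hxy
  have := hmax (insert g V) (Set.subset_insert _ _)
    ⟨Set.mem_insert_of_mem _ h1V, hsepW⟩
  have hgV : g ∈ V := this ▸ Set.mem_insert g V
  exact ⟨⟨g, hgV⟩, by simpa using h1K⟩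

lemma aux_adj_or_eq (hKsymm : K⁻¹ = K) (a b : V)
    (hab : (a : G)⁻¹ * b ∈ K * K * K) :
    a = b ∨ (sepGraph G K V).Adj a b := by
  by_cases h : a = b
  · exact Or.inl h
  refine Or.inr ⟨h, hab, ?_⟩
  obtain ⟨p, hp, c, hc, hpc⟩ := hab
  obtain ⟨x, hx, y, hy, hxy⟩ := hp
  simp only at hxy hpc
  subst hxy
  have : (b : G)⁻¹ * a = c⁻¹ * y⁻¹ * x⁻¹ := by
    rw [show ((b : G)⁻¹ * (a : G)) = ((a : G)⁻¹ * (b : G))⁻¹ by group, ← hpc]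
    group
  rw [this]
  exact aux_k3 (aux_invK hKsymm hc) (aux_invK hKsymm hy) (aux_invK hKsymm hx)

lemma aux_dist_le_one (hKsymm : K⁻¹ = K) (a b : V)
    (hab : (a : G)⁻¹ * b ∈ K * K * K) :
    (sepGraph G K V).dist a b ≤ 1 := by
  rcases aux_adj_or_eq hKsymm a b hab with rfl | h
  · simp [SimpleGraph.dist_self]
  · exact le_of_eq (SimpleGraph.dist_eq_one_iff_adj.mpr h)

end Aux

section Aux2

variable {G : Type*} [Group G] {K V : Set G}

lemma aux_inv_side (hKsymm : K⁻¹ = K) {v g : G} (h : v⁻¹ * g ∈ K) :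
    g⁻¹ * v ∈ K := by
  have := aux_invK hKsymm h
  rwa [mul_inv_rev, inv_inv] at this

lemma aux_reach (hKsymm : K⁻¹ = K) (h1K : (1 : G) ∈ K) (h1V : (1 : G) ∈ V)
    (hsep : ∀ x ∈ V, ∀ y ∈ V, x ≠ y → x⁻¹ * y ∉ K)
    (hmax : ∀ W : Set G, V ⊆ W →
      ((1 : G) ∈ W ∧ ∀ x ∈ W, ∀ y ∈ W, x ≠ y → x⁻¹ * y ∉ K) → W = V) :
    ∀ n (g : G), g ∈ K ^ n → ∀ x : V, (x : G)⁻¹ * g ∈ K →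
      (sepGraph G K V).Reachable ⟨1, h1V⟩ x := by
  intro n
  induction n with
  | zero =>
    intro g hg x hx
    rw [pow_zero, Set.mem_one] at hg
    subst hg
    by_cases hx1 : (x : G) = 1
    · have hx2 : (⟨1, h1V⟩ : V) = x := Subtype.ext hx1.symm
      rw [hx2]
    · exact absurd hx (hsep x x.2 1 h1V hx1)
  | succ n ih =>
    intro g hg x hx
    rw [pow_succ] at hg
    obtain ⟨p, hp, k, hk, hpk⟩ := hg
    simp only at hpk
    obtain ⟨c, hc⟩ := aux_cover hKsymm h1K h1V hsep hmax p
    have hrc := ih p hp c hc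
    have hcx : (c : G)⁻¹ * x ∈ K * K * K := by
      rw [show (c : G)⁻¹ * x = ((c : G)⁻¹ * p) * k * (g⁻¹ * x) by
        rw [← hpk]; group]
      exact aux_k3 hc hk (aux_inv_side hKsymm hx)
    rcases aux_adj_or_eq hKsymm c x hcx with rfl | hadj
    · exact hrc
    · exact hrc.trans hadj.reachable

lemma aux_conn (hKsymm : K⁻¹ = K) (h1K : (1 : G) ∈ K) (h1V : (1 : G) ∈ V)
    (hKgen : Subgroup.closure K = ⊤)
    (hsep : ∀ x ∈ V, ∀ y ∈ V, x ≠ y → x⁻¹ * y ∉ K)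
    (hmax : ∀ W : Set G, V ⊆ W →
      ((1 : G) ∈ W ∧ ∀ x ∈ W, ∀ y ∈ W, x ≠ y → x⁻¹ * y ∉ K) → W = V) :
    (sepGraph G K V).Connected := by
  have hreach1 : ∀ x : V, (sepGraph G K V).Reachable ⟨1, h1V⟩ x := by
    intro x
    have hx : (x : G) ∈ Subgroup.closure K := hKgen ▸ Subgroup.mem_top _
    have hpow : ∃ n, (x : G) ∈ K ^ n := by
      refine Subgroup.closure_induction
        (fun k hk => ⟨1, by simpa [pow_one] using hk⟩)
        ⟨0, by simp [pow_zero, Set.mem_one]⟩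
        (fun a b _ _ ⟨m, hm⟩ ⟨n, hn⟩ =>
          ⟨m + n, by rw [pow_add]; exact Set.mul_mem_mul hm hn⟩)
        (fun a _ ⟨m, hm⟩ =>
          ⟨m, by rw [← hKsymm, inv_pow]; exact Set.inv_mem_inv.mpr hm⟩) hx
    obtain ⟨n, hn⟩ := hpow
    exact aux_reach hKsymm h1K h1V hsep hmax n x hn x (by simpa using h1K)
  have : Nonempty V := ⟨⟨1, h1V⟩⟩
  exact SimpleGraph.Connected.mk (fun x y => (hreach1 x).symm.trans (hreach1 y))

lemma aux_dist_le_three (hKsymm : K⁻¹ = K) (h1K : (1 : G) ∈ K) (h1V : (1 : G) ∈ V)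
    (hsep : ∀ x ∈ V, ∀ y ∈ V, x ≠ y → x⁻¹ * y ∉ K)
    (hmax : ∀ W : Set G, V ⊆ W →
      ((1 : G) ∈ W ∧ ∀ x ∈ W, ∀ y ∈ W, x ≠ y → x⁻¹ * y ∉ K) → W = V)
    (hconn : (sepGraph G K V).Connected)
    (a b : V) (p q : G) (hap : (a : G)⁻¹ * p ∈ K) (hbq : (b : G)⁻¹ * q ∈ K)
    (hpq : p⁻¹ * q ∈ K * K * K) :
    (sepGraph G K V).dist a b ≤ 3 := by
  obtain ⟨r, hr, k3, hk3, hrk⟩ := hpq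
  obtain ⟨k1, hk1, k2, hk2, hk12⟩ := hr
  simp only at hrk hk12
  subst hk12
  have hq : q = p * k1 * k2 * k3 := by
    rw [show p * k1 * k2 * k3 = p * (k1 * k2 * k3) by group, hrk]; group
  subst hq
  obtain ⟨c1, hc1⟩ := aux_cover hKsymm h1K h1V hsep hmax (p * k1)
  obtain ⟨c2, hc2⟩ := aux_cover hKsymm h1K h1V hsep hmax (p * k1 * k2)
  have d1 : (sepGraph G K V).dist a c1 ≤ 1 := by
    refine aux_dist_le_one hKsymm a c1 ?_
    rw [show (a : G)⁻¹ * c1 = ((a : G)⁻¹ * p) * k1 * ((p * k1)⁻¹ * c1) by group]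
    exact aux_k3 hap hk1 (aux_inv_side hKsymm hc1)
  have d2 : (sepGraph G K V).dist c1 c2 ≤ 1 := by
    refine aux_dist_le_one hKsymm c1 c2 ?_
    rw [show (c1 : G)⁻¹ * c2 =
      ((c1 : G)⁻¹ * (p * k1)) * k2 * ((p * k1 * k2)⁻¹ * c2) by group]
    exact aux_k3 hc1 hk2 (aux_inv_side hKsymm hc2)
  have d3 : (sepGraph G K V).dist c2 b ≤ 1 := by
    refine aux_dist_le_one hKsymm c2 b ?_
    rw [show (c2 : G)⁻¹ * b =
      ((c2 : G)⁻¹ * (p * k1 * k2)) * k3 * ((p * k1 * k2 * k3)⁻¹ * b) by group]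
    exact aux_k3 hc2 hk3 (aux_inv_side hKsymm hbq)
  have t1 := hconn.dist_triangle (u := a) (v := c1) (w := b)
  have t2 := hconn.dist_triangle (u := c1) (v := c2) (w := b)
  omega

lemma aux_walk_transfer (hKsymm : K⁻¹ = K) (h1K : (1 : G) ∈ K) (h1V : (1 : G) ∈ V)
    (hsep : ∀ x ∈ V, ∀ y ∈ V, x ≠ y → x⁻¹ * y ∉ K)
    (hmax : ∀ W : Set G, V ⊆ W →
      ((1 : G) ∈ W ∧ ∀ x ∈ W, ∀ y ∈ W, x ≠ y → x⁻¹ * y ∉ K) → W = V)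
    (hconn : (sepGraph G K V).Connected) (g0 : G) :
    ∀ {x y : V} (p : (sepGraph G K V).Walk x y) (a : V),
      (a : G)⁻¹ * (g0 * x) ∈ K →
      ∃ b : V, (b : G)⁻¹ * (g0 * y) ∈ K ∧
        (sepGraph G K V).dist a b ≤ 3 * p.length := by
  intro x y p
  induction p with
  | nil => exact fun a ha => ⟨a, ha, by simp⟩
  | @cons u v w hadj p ih =>
    intro a ha
    obtain ⟨c, hc⟩ := aux_cover hKsymm h1K h1V hsep hmax (g0 * v)
    have hd : (sepGraph G K V).dist a c ≤ 3 := by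
      refine aux_dist_le_three hKsymm h1K h1V hsep hmax hconn a c (g0 * u) (g0 * v)
        ha hc ?_
      rw [show (g0 * u)⁻¹ * (g0 * v) = (u : G)⁻¹ * v by group]
      exact hadj.2.1
    obtain ⟨b, hb, hdb⟩ := ih c hc
    refine ⟨b, hb, ?_⟩
    have t := hconn.dist_triangle (u := a) (v := c) (w := b)
    simp only [SimpleGraph.Walk.length_cons]
    omega

end Aux2

section Key

variable {G : Type*} [Group G] {K V : Set G}

lemma aux_gnorm_le (h1V : (1 : G) ∈ V) (g : G) (u : V) (hu : (u : G)⁻¹ * g ∈ K) :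
    gnorm K V h1V g ≤ (sepGraph G K V).dist ⟨1, h1V⟩ u :=
  Nat.sInf_le ⟨u, rfl, hu⟩

lemma aux_gnorm_witness (hKsymm : K⁻¹ = K) (h1K : (1 : G) ∈ K) (h1V : (1 : G) ∈ V)
    (hsep : ∀ x ∈ V, ∀ y ∈ V, x ≠ y → x⁻¹ * y ∉ K)
    (hmax : ∀ W : Set G, V ⊆ W →
      ((1 : G) ∈ W ∧ ∀ x ∈ W, ∀ y ∈ W, x ≠ y → x⁻¹ * y ∉ K) → W = V)
    (g : G) :
    ∃ v : V, (sepGraph G K V).dist ⟨1, h1V⟩ v = gnorm K V h1V g ∧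
      (v : G)⁻¹ * g ∈ K := by
  obtain ⟨v, hv⟩ := aux_cover hKsymm h1K h1V hsep hmax g
  have hne : {n : ℕ | ∃ v : V, (sepGraph G K V).dist ⟨1, h1V⟩ v = n ∧
      (v : G)⁻¹ * g ∈ K}.Nonempty := ⟨_, v, rfl, hv⟩
  exact Nat.sInf_mem hne

lemma aux_key1 (hKsymm : K⁻¹ = K) (h1K : (1 : G) ∈ K) (h1V : (1 : G) ∈ V)
    (hsep : ∀ x ∈ V, ∀ y ∈ V, x ≠ y → x⁻¹ * y ∉ K)
    (hmax : ∀ W : Set G, V ⊆ W →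
      ((1 : G) ∈ W ∧ ∀ x ∈ W, ∀ y ∈ W, x ≠ y → x⁻¹ * y ∉ K) → W = V)
    (hconn : (sepGraph G K V).Connected) (g h : G) :
    gnorm K V h1V (g * h) ≤ gnorm K V h1V g + 3 * gnorm K V h1V h + 1 := by
  obtain ⟨v, hv1, hv2⟩ := aux_gnorm_witness hKsymm h1K h1V hsep hmax g
  obtain ⟨w, hw1, hw2⟩ := aux_gnorm_witness hKsymm h1K h1V hsep hmax h
  obtain ⟨p, hp⟩ := hconn.exists_walk_length_eq_dist ⟨1, h1V⟩ w
  obtain ⟨b, hb, hdb⟩ := aux_walk_transfer hKsymm h1K h1V hsep hmax hconn g p v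
    (by simpa using hv2)
  obtain ⟨u, hu⟩ := aux_cover hKsymm h1K h1V hsep hmax (g * h)
  have hbu : (sepGraph G K V).dist b u ≤ 1 := by
    refine aux_dist_le_one hKsymm b u ?_
    rw [show (b : G)⁻¹ * u =
      ((b : G)⁻¹ * (g * w)) * ((w : G)⁻¹ * h) * ((g * h)⁻¹ * u) by group]
    exact aux_k3 hb hw2 (aux_inv_side hKsymm hu)
  have hle := aux_gnorm_le h1V (g * h) u hu
  have t1 := hconn.dist_triangle (u := (⟨1, h1V⟩ : V)) (v := v) (w := u)
  have t2 := hconn.dist_triangle (u := v) (v := b) (w := u)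
  omega

lemma aux_key2 (hKsymm : K⁻¹ = K) (h1K : (1 : G) ∈ K) (h1V : (1 : G) ∈ V)
    (hsep : ∀ x ∈ V, ∀ y ∈ V, x ≠ y → x⁻¹ * y ∉ K)
    (hmax : ∀ W : Set G, V ⊆ W →
      ((1 : G) ∈ W ∧ ∀ x ∈ W, ∀ y ∈ W, x ≠ y → x⁻¹ * y ∉ K) → W = V)
    (hconn : (sepGraph G K V).Connected) (g h : G) :
    gnorm K V h1V g ≤ gnorm K V h1V (g * h) + 3 * gnorm K V h1V h + 1 := by
  obtain ⟨u, hu1, hu2⟩ := aux_gnorm_witness hKsymm h1K h1V hsep hmax (g * h)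
  obtain ⟨w, hw1, hw2⟩ := aux_gnorm_witness hKsymm h1K h1V hsep hmax h
  obtain ⟨a, ha⟩ := aux_cover hKsymm h1K h1V hsep hmax (g * w)
  have hua : (sepGraph G K V).dist u a ≤ 1 := by
    refine aux_dist_le_one hKsymm u a ?_
    rw [show (u : G)⁻¹ * a =
      ((u : G)⁻¹ * (g * h)) * (h⁻¹ * w) * ((g * w)⁻¹ * a) by group]
    exact aux_k3 hu2 (aux_inv_side hKsymm hw2) (aux_inv_side hKsymm ha)
  obtain ⟨p, hp⟩ := hconn.exists_walk_length_eq_dist ⟨1, h1V⟩ w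
  obtain ⟨b, hb, hdb⟩ := aux_walk_transfer hKsymm h1K h1V hsep hmax hconn g
    p.reverse a ha
  have hlen : p.reverse.length = p.length := SimpleGraph.Walk.length_reverse _
  have hb' : (b : G)⁻¹ * g ∈ K := by simpa using hb
  have hle := aux_gnorm_le h1V g b hb'
  have t1 := hconn.dist_triangle (u := (⟨1, h1V⟩ : V)) (v := u) (w := b)
  have t2 := hconn.dist_triangle (u := u) (v := a) (w := b)
  omega

end Key

/-- For a compactly generated locally compact group `G` with compact symmetric generating
neighborhood `K` of `1` and maximal `K`-separated `V ∋ 1`, the norm-like function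
`‖g‖ = inf {d_Γ(1,v) : g ∈ vK}` satisfies `|‖gh‖ - ‖g‖| ≤ 3‖h‖ + 1`. -/
theorem gnorm_quasi_subadditive {G : Type*} [Group G] [TopologicalSpace G]
    [IsTopologicalGroup G] [LocallyCompactSpace G]
    (K : Set G) (hKcpt : IsCompact K) (hKsymm : K⁻¹ = K) (hKnhds : K ∈ nhds (1 : G))
    (hKgen : Subgroup.closure K = ⊤)
    (V : Set G) (h1V : (1 : G) ∈ V)
    (hsep : ∀ x ∈ V, ∀ y ∈ V, x ≠ y → x⁻¹ * y ∉ K)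
    (hmax : ∀ W : Set G, V ⊆ W →
      ((1 : G) ∈ W ∧ ∀ x ∈ W, ∀ y ∈ W, x ≠ y → x⁻¹ * y ∉ K) → W = V) :
    ∀ g h : G,
      |(gnorm K V h1V (g * h) : ℝ) - (gnorm K V h1V g : ℝ)| ≤
        3 * (gnorm K V h1V h : ℝ) + 1 := by
  intro g h
  have h1K : (1 : G) ∈ K := mem_of_mem_nhds hKnhds
  have hconn := aux_conn hKsymm h1K h1V hKgen hsep hmax
  have k1 := aux_key1 hKsymm h1K h1V hsep hmax hconn g h
  have k2 := aux_key2 hKsymm h1K h1V hsep hmax hconn g h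
  have c1 : (gnorm K V h1V (g * h) : ℝ) ≤
      (gnorm K V h1V g : ℝ) + 3 * (gnorm K V h1V h : ℝ) + 1 := by exact_mod_cast k1
  have c2 : (gnorm K V h1V g : ℝ) ≤
      (gnorm K V h1V (g * h) : ℝ) + 3 * (gnorm K V h1V h : ℝ) + 1 := by
    exact_mod_cast k2
  rw [abs_sub_le_iff]
  constructor <;> linarith
end
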